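/- arXiv:0809.3421 — 4 statements merged into one kernel-verified Lean document; each statement's English description precedes it below -/
import Mathlib

section
/- Let κ > 0 and γ ≥ 2κ + 1. Then there exists a constant c > 0 depending only on κ such that for all A > 0, B ≥ 0, and all integers n ≥ 1: ∫_0^1 (1−t²)^{κ−1} / (1 + n·√(B + A·(1−t)))^γ dt ≤ c·n^{−2κ} / ( A^κ · (1 + n·√B)^{γ − 2κ − 1} ). -/
set_option maxHeartbeats 1000000

noncomputable section

open Real MeasureTheory intervalIntegral


lemma key14 (κ : ℝ) (hκ : 0 < κ) (M : ℝ) (hM : 0 < M) :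
    ∫ s in (0:ℝ)..1, s ^ (κ-1) * (1 + M * Real.sqrt s) ^ (-(2*κ+1)) ≤
      (1/κ + 2) * M ^ (-(2*κ)) := by
  set e : ℝ := 2*κ+1 with he
  have hepos : 0 < e := by positivity
  set h : ℝ → ℝ := fun s => s ^ (κ-1) * (1 + M * Real.sqrt s) ^ (-e) with hh
  have hmeas : Measurable h := by fun_prop
  have hbound : ∀ s : ℝ, 0 ≤ s → ‖h s‖ ≤ s ^ (κ-1) := by
    intro s hs
    have h1 : (0:ℝ) ≤ 1 + M * Real.sqrt s := by positivity
    have hub : (1 + M * Real.sqrt s) ^ (-e) ≤ 1 :=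
      Real.rpow_le_one_of_one_le_of_nonpos
        (by nlinarith [Real.sqrt_nonneg s, hM.le]) (by linarith)
    have hnn : 0 ≤ h s := mul_nonneg (Real.rpow_nonneg hs _) (Real.rpow_nonneg h1 _)
    rw [Real.norm_of_nonneg hnn]
    exact mul_le_of_le_one_right (Real.rpow_nonneg hs _) hub
  have hrint : ∀ a b : ℝ, IntervalIntegrable (fun s : ℝ => s ^ (κ-1)) volume a b :=
    fun a b => intervalIntegrable_rpow' (by linarith)
  have hint : ∀ a b : ℝ, 0 ≤ a → a ≤ b → IntervalIntegrable h volume a b := by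
    intro a b ha hab
    rw [intervalIntegrable_iff_integrableOn_Ioc_of_le hab]
    refine Integrable.mono' ((intervalIntegrable_iff_integrableOn_Ioc_of_le hab).mp (hrint a b))
      hmeas.aestronglyMeasurable ?_
    refine (ae_restrict_iff' measurableSet_Ioc).mpr (.of_forall fun s hs => ?_)
    exact hbound s (ha.trans hs.1.le)
  have hMn : (0:ℝ) ≤ M := hM.le
  have hMpow : 0 < M ^ (-(2*κ)) := Real.rpow_pos_of_pos hM _
  have hval : ∀ b : ℝ, 0 ≤ b → ∫ s in (0:ℝ)..b, s ^ (κ-1) = b ^ κ / κ := by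
    intro b hb
    rw [integral_rpow (Or.inl (by linarith))]
    rw [sub_add_cancel, Real.zero_rpow hκ.ne', sub_zero]
  have hb' : ∀ s : ℝ, 0 ≤ s → h s ≤ s ^ (κ-1) :=
    fun s hs => (le_abs_self _).trans (hbound s hs)
  rcases le_or_gt 1 M with hM1 | hM1
  · -- M ≥ 1 : split at s₀ = M^(-2)
    set s₀ : ℝ := M ^ (-2 : ℝ) with hs₀
    have hs₀pos : 0 < s₀ := Real.rpow_pos_of_pos hM _
    have hs₀le : s₀ ≤ 1 := Real.rpow_le_one_of_one_le_of_nonpos hM1 (by norm_num)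
    have hsplit : (∫ s in (0:ℝ)..1, h s) =
        (∫ s in (0:ℝ)..s₀, h s) + ∫ s in s₀..1, h s :=
      (integral_add_adjacent_intervals (hint 0 s₀ le_rfl hs₀pos.le)
        (hint s₀ 1 hs₀pos.le hs₀le)).symm
    have hs₀pow : s₀ ^ κ = M ^ (-(2*κ)) := by
      rw [hs₀, ← Real.rpow_mul hMn]
      norm_num
    have part1 : (∫ s in (0:ℝ)..s₀, h s) ≤ (1/κ) * M ^ (-(2*κ)) := by
      have hle : (∫ s in (0:ℝ)..s₀, h s) ≤ ∫ s in (0:ℝ)..s₀, s ^ (κ-1) :=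
        integral_mono_on hs₀pos.le (hint 0 s₀ le_rfl hs₀pos.le) (hrint 0 s₀)
          (fun s hs => hb' s hs.1)
      rw [hval s₀ hs₀pos.le, hs₀pow] at hle
      calc (∫ s in (0:ℝ)..s₀, h s) ≤ M ^ (-(2*κ)) / κ := hle
      _ = (1/κ) * M ^ (-(2*κ)) := by ring
    have part2 : (∫ s in s₀..1, h s) ≤ 2 * M ^ (-(2*κ)) := by
      have hpt : ∀ s ∈ Set.Icc s₀ (1:ℝ), h s ≤ M ^ (-e) * s ^ (-(3/2) : ℝ) := by
        intro s hs
        have hspos : 0 < s := hs₀pos.trans_le hs.1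
        have hsq : 0 < Real.sqrt s := Real.sqrt_pos.mpr hspos
        have hd : (1 + M * Real.sqrt s) ^ (-e) ≤ (M * Real.sqrt s) ^ (-e) :=
          Real.rpow_le_rpow_of_nonpos (by positivity) (by linarith) (by linarith)
        have heq : (M * Real.sqrt s) ^ (-e) = M ^ (-e) * s ^ ((1/2) * (-e)) := by
          rw [Real.mul_rpow hMn (Real.sqrt_nonneg s), Real.sqrt_eq_rpow,
            ← Real.rpow_mul hspos.le]
        have : h s ≤ s ^ (κ-1) * (M ^ (-e) * s ^ ((1/2) * (-e))) := by
          refine mul_le_mul_of_nonneg_left ?_ (Real.rpow_nonneg hspos.le _)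
          rw [← heq]; exact hd
        refine this.trans (le_of_eq ?_)
        have hexp : κ - 1 + 1/2 * (-e) = -(3/2 : ℝ) := by rw [he]; ring
        rw [mul_comm (M ^ (-e)), ← mul_assoc, ← Real.rpow_add hspos, hexp]
        ring
      have hintr : IntervalIntegrable (fun s : ℝ => M ^ (-e) * s ^ (-(3/2) : ℝ)) volume s₀ 1 := by
        refine (intervalIntegrable_rpow ?_).const_mul _
        right
        intro hc
        rw [Set.mem_uIcc] at hc
        rcases hc with ⟨h1, _⟩ | ⟨_, h2⟩ <;> linarith
      have hle : (∫ s in s₀..1, h s) ≤ ∫ s in s₀..1, M ^ (-e) * s ^ (-(3/2) : ℝ) :=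
        integral_mono_on hs₀le (hint s₀ 1 hs₀pos.le hs₀le) hintr hpt
      have hcomp : (∫ s in s₀..1, M ^ (-e) * s ^ (-(3/2) : ℝ)) ≤ 2 * M ^ (-(2*κ)) := by
        rw [intervalIntegral.integral_const_mul, integral_rpow]
        · have h1 : (1:ℝ) ^ (-(3/2) + 1 : ℝ) = 1 := Real.one_rpow _
          have h2 : s₀ ^ (-(3/2) + 1 : ℝ) = M := by
            rw [hs₀, ← Real.rpow_mul hMn]
            norm_num
          rw [h1, h2]
          have : M ^ (-e) * ((1 - M) / (-(3/2) + 1)) = M ^ (-e) * (2 * (M - 1)) := by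
            congr 1; field_simp; ring
          rw [this]
          have hMe : M ^ (-e) * M = M ^ (-(2*κ)) := by
            nth_rewrite 2 [← Real.rpow_one M]
            rw [← Real.rpow_add hM]
            congr 1; rw [he]; ring
          have hnn : 0 ≤ M ^ (-e) := Real.rpow_nonneg hMn _
          nlinarith [hMe, hnn, Real.rpow_pos_of_pos hM (-e)]
        · right
          constructor
          · norm_num
          · intro hc
            rw [Set.mem_uIcc] at hc
            rcases hc with ⟨h1, _⟩ | ⟨_, h2⟩ <;> linarith
      exact hle.trans hcomp
    calc (∫ s in (0:ℝ)..1, h s) = _ + _ := hsplit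
    _ ≤ (1/κ) * M ^ (-(2*κ)) + 2 * M ^ (-(2*κ)) := add_le_add part1 part2
    _ = (1/κ + 2) * M ^ (-(2*κ)) := by ring
  · -- M < 1
    have hle : (∫ s in (0:ℝ)..1, h s) ≤ ∫ s in (0:ℝ)..1, s ^ (κ-1) :=
      integral_mono_on zero_le_one (hint 0 1 le_rfl zero_le_one) (hrint 0 1)
        (fun s hs => hb' s hs.1)
    rw [hval 1 zero_le_one, Real.one_rpow] at hle
    have h1 : (1:ℝ) ≤ M ^ (-(2*κ)) :=
      Real.one_le_rpow_of_pos_of_le_one_of_nonpos hM hM1.le (by linarith)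
    calc (∫ s in (0:ℝ)..1, h s) ≤ 1/κ := hle
    _ ≤ (1/κ) * M ^ (-(2*κ)) := by
        nth_rewrite 1 [← mul_one (1/κ)]
        exact mul_le_mul_of_nonneg_left h1 (by positivity)
    _ ≤ (1/κ + 2) * M ^ (-(2*κ)) := by nlinarith

lemma key14_int (κ : ℝ) (hκ : 0 < κ) (M : ℝ) (hM : 0 ≤ M) :
    IntervalIntegrable (fun s : ℝ => s ^ (κ-1) * (1 + M * Real.sqrt s) ^ (-(2*κ+1)))
      volume 0 1 := by
  rw [intervalIntegrable_iff_integrableOn_Ioc_of_le zero_le_one]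
  refine Integrable.mono'
    ((intervalIntegrable_iff_integrableOn_Ioc_of_le zero_le_one).mp
      (intervalIntegrable_rpow' (r := κ - 1) (by linarith))) ((show Measurable (fun s : ℝ => s ^ (κ-1) * (1 + M * Real.sqrt s) ^ (-(2*κ+1))) by fun_prop).aestronglyMeasurable) ?_
  refine (ae_restrict_iff' measurableSet_Ioc).mpr (.of_forall fun s hs => ?_)
  have hs0 : (0:ℝ) ≤ s := hs.1.le
  have h1 : (0:ℝ) ≤ 1 + M * Real.sqrt s := by positivity
  have hub : (1 + M * Real.sqrt s) ^ (-(2*κ+1)) ≤ 1 :=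
    Real.rpow_le_one_of_one_le_of_nonpos
      (by nlinarith [Real.sqrt_nonneg s, hM]) (by linarith)
  have hnn : 0 ≤ s ^ (κ-1) * (1 + M * Real.sqrt s) ^ (-(2*κ+1)) :=
    mul_nonneg (Real.rpow_nonneg hs0 _) (Real.rpow_nonneg h1 _)
  rw [Real.norm_of_nonneg hnn]
  exact mul_le_of_le_one_right (Real.rpow_nonneg hs0 _) hub

/-- For `κ > 0` and `γ ≥ 2κ+1`,
`∫₀¹ (1−t²)^{κ−1} (1+n√(B+A(1−t)))^{−γ} dt ≤ c n^{−2κ} A^{−κ} (1+n√B)^{−(γ−2κ−1)}`,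
with a constant `c` depending only on `κ`. -/
theorem statement14 (κ : ℝ) (hκ : 0 < κ) :
    ∃ c : ℝ, 0 < c ∧ ∀ γ : ℝ, 2 * κ + 1 ≤ γ → ∀ A B : ℝ, 0 < A → 0 ≤ B →
      ∀ n : ℕ, 1 ≤ n →
        (∫ t in Set.Ioo (0:ℝ) 1,
            (1 - t ^ 2) ^ (κ - 1) / (1 + (n : ℝ) * Real.sqrt (B + A * (1 - t))) ^ γ) ≤
          c * (n : ℝ) ^ (-(2 * κ)) /
            (A ^ κ * (1 + (n : ℝ) * Real.sqrt B) ^ (γ - 2 * κ - 1)) := by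
  set C₀ : ℝ := max 1 (2 ^ (κ - 1)) with hC₀
  have hC₀pos : 0 < C₀ := lt_of_lt_of_le one_pos (le_max_left _ _)
  refine ⟨C₀ * (1/κ + 2), by positivity, ?_⟩
  intro γ hγ A B hA hB n hn
  have hn0 : (0:ℝ) < (n:ℝ) := by exact_mod_cast Nat.pos_of_ne_zero (by omega)
  set e : ℝ := 2 * κ + 1 with he
  set M : ℝ := (n:ℝ) * Real.sqrt A with hM
  have hMpos : 0 < M := mul_pos hn0 (Real.sqrt_pos.mpr hA)
  set P : ℝ := 1 + (n:ℝ) * Real.sqrt B with hP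
  have hP1 : 1 ≤ P := by
    have := Real.sqrt_nonneg B; nlinarith
  have hPpos : 0 < P := lt_of_lt_of_le one_pos hP1
  set Kb : ℝ := P ^ (γ - e) with hKb
  have hKbpos : 0 < Kb := Real.rpow_pos_of_pos hPpos _
  set h : ℝ → ℝ := fun s => s ^ (κ-1) * (1 + M * Real.sqrt s) ^ (-e) with hh
  set g : ℝ → ℝ := fun t => (C₀ * Kb⁻¹) * h (1 - t) with hg
  set f : ℝ → ℝ := fun t =>
    (1 - t ^ 2) ^ (κ - 1) / (1 + (n : ℝ) * Real.sqrt (B + A * (1 - t))) ^ γ with hf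
  -- pointwise bound
  have hpt : ∀ t ∈ Set.Ioo (0:ℝ) 1, f t ≤ g t := by
    intro t ht
    obtain ⟨ht0, ht1⟩ := ht
    have h1t : (0:ℝ) < 1 - t := by linarith
    have hD0 : (0:ℝ) ≤ B + A * (1 - t) := by nlinarith
    set D : ℝ := 1 + (n:ℝ) * Real.sqrt (B + A * (1 - t)) with hD
    have hD1 : 1 ≤ D := by
      have := Real.sqrt_nonneg (B + A * (1 - t)); nlinarith
    have hDpos : 0 < D := lt_of_lt_of_le one_pos hD1
    -- numerator bound
    have hnum : (1 - t ^ 2) ^ (κ - 1) ≤ C₀ * (1 - t) ^ (κ - 1) := by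
      have hsplit : (1 - t ^ 2 : ℝ) = (1 - t) * (1 + t) := by ring
      rw [hsplit, Real.mul_rpow h1t.le (by linarith), mul_comm]
      refine mul_le_mul_of_nonneg_right ?_ (Real.rpow_nonneg h1t.le _)
      rcases le_total κ 1 with hκ1 | hκ1
      · exact le_trans (Real.rpow_le_one_of_one_le_of_nonpos (by linarith) (by linarith))
          (le_max_left _ _)
      · exact le_trans (Real.rpow_le_rpow (by linarith) (by linarith) (by linarith))
          (le_max_right _ _)
    -- denominator bound
    have hMs : M * Real.sqrt (1 - t) = (n:ℝ) * Real.sqrt (A * (1 - t)) := by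
      rw [hM, Real.sqrt_mul hA.le, mul_assoc]
    have hQpos : 0 < 1 + M * Real.sqrt (1 - t) := by positivity
    have hQe : (1 + M * Real.sqrt (1 - t)) ^ e ≤ D ^ e := by
      refine Real.rpow_le_rpow hQpos.le ?_ (by positivity)
      rw [hMs, hD]
      have : Real.sqrt (A * (1 - t)) ≤ Real.sqrt (B + A * (1 - t)) :=
        Real.sqrt_le_sqrt (by nlinarith)
      nlinarith
    have hKbD : Kb ≤ D ^ (γ - e) := by
      refine Real.rpow_le_rpow hPpos.le ?_ (by rw [he]; linarith)
      rw [hP, hD]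
      have : Real.sqrt B ≤ Real.sqrt (B + A * (1 - t)) :=
        Real.sqrt_le_sqrt (by nlinarith)
      nlinarith
    have hDγ : Kb * (1 + M * Real.sqrt (1 - t)) ^ e ≤ D ^ γ := by
      have : D ^ γ = D ^ (γ - e) * D ^ e := by
        rw [← Real.rpow_add hDpos]; ring_nf
      rw [this]
      exact mul_le_mul hKbD hQe (Real.rpow_nonneg hQpos.le _) (Real.rpow_nonneg hDpos.le _)
    have hgval : g t = (C₀ * (1 - t) ^ (κ - 1)) / (Kb * (1 + M * Real.sqrt (1 - t)) ^ e) := by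
      rw [hg, hh]
      simp only []
      rw [Real.rpow_neg hQpos.le]
      field_simp
    rw [hf, hgval]
    refine div_le_div₀ (by positivity) hnum (by positivity) hDγ
  -- integrability of g
  have hgint : IntegrableOn g (Set.Ioo (0:ℝ) 1) := by
    have h1 : IntervalIntegrable h volume 0 1 := key14_int κ hκ M hMpos.le
    have h2 : IntervalIntegrable (fun t => h (1 - t)) volume 0 1 := by
      simpa using (h1.comp_sub_left 1).symm
    have h3 : IntegrableOn (fun t => h (1 - t)) (Set.Ioo (0:ℝ) 1) :=
      ((intervalIntegrable_iff_integrableOn_Ioc_of_le zero_le_one).mp h2).mono_set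
        Set.Ioo_subset_Ioc_self
    exact h3.const_mul _
  -- nonnegativity of f on the set
  have hfnn : ∀ t ∈ Set.Ioo (0:ℝ) 1, 0 ≤ f t := by
    intro t ht
    obtain ⟨ht0, ht1⟩ := ht
    have : (0:ℝ) ≤ 1 - t ^ 2 := by nlinarith
    have hDnn : (0:ℝ) ≤ 1 + (n:ℝ) * Real.sqrt (B + A * (1 - t)) := by positivity
    exact div_nonneg (Real.rpow_nonneg this _) (Real.rpow_nonneg hDnn _)
  have step1 : (∫ t in Set.Ioo (0:ℝ) 1, f t) ≤ ∫ t in Set.Ioo (0:ℝ) 1, g t := by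
    refine integral_mono_of_nonneg ?_ hgint ?_
    · exact (ae_restrict_iff' measurableSet_Ioo).mpr (.of_forall hfnn)
    · exact (ae_restrict_iff' measurableSet_Ioo).mpr (.of_forall hpt)
  have step2 : (∫ t in Set.Ioo (0:ℝ) 1, g t) = (C₀ * Kb⁻¹) * ∫ s in (0:ℝ)..1, h s := by
    rw [hg]
    simp only
    rw [MeasureTheory.integral_const_mul]
    congr 1
    rw [← integral_Ioc_eq_integral_Ioo, ← intervalIntegral.integral_of_le zero_le_one]
    have := intervalIntegral.integral_comp_sub_left (a := 0) (b := 1) h 1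
    simpa using this
  have step3 : (∫ s in (0:ℝ)..1, h s) ≤ (1/κ + 2) * M ^ (-(2*κ)) := key14 κ hκ M hMpos
  have hMdecomp : M ^ (-(2*κ)) = (n:ℝ) ^ (-(2*κ)) * (A ^ κ)⁻¹ := by
    rw [hM, Real.mul_rpow hn0.le (Real.sqrt_nonneg A)]
    congr 1
    rw [Real.sqrt_eq_rpow, ← Real.rpow_mul hA.le,
      show (1/2 * -(2*κ) : ℝ) = -κ by ring, Real.rpow_neg hA.le]
  have hfin : (C₀ * Kb⁻¹) * ((1/κ + 2) * M ^ (-(2*κ))) =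
      C₀ * (1/κ + 2) * (n:ℝ) ^ (-(2 * κ)) / (A ^ κ * (1 + (n:ℝ) * Real.sqrt B) ^ (γ - 2 * κ - 1)) := by
    rw [hMdecomp, hKb, show γ - e = γ - 2*κ - 1 by rw [he]; ring, ← hP]
    have hAκ : (0:ℝ) < A ^ κ := Real.rpow_pos_of_pos hA _
    have hPp : (0:ℝ) < P ^ (γ - 2*κ - 1) := Real.rpow_pos_of_pos hPpos _
    field_simp
  calc (∫ t in Set.Ioo (0:ℝ) 1, f t) ≤ ∫ t in Set.Ioo (0:ℝ) 1, g t := step1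
  _ = (C₀ * Kb⁻¹) * ∫ s in (0:ℝ)..1, h s := step2
  _ ≤ (C₀ * Kb⁻¹) * ((1/κ + 2) * M ^ (-(2*κ))) := by
      refine mul_le_mul_of_nonneg_left step3 (by positivity)
  _ = _ := hfin

end
end

section
/- For every positive integer k: ∑_{l : k/2 ≤ l ≤ k} k^l / ( (k−l)! · (2l−k)! ) ≤ 2·(2e²)^k, where the sum is over all integers l with k/2 ≤ l ≤ k. -/
open Real

lemma aux_pow_div_fac_le (x : ℝ) (hx : 0 ≤ x) (n : ℕ) :
    x ^ n / (Nat.factorial n : ℝ) ≤ Real.exp x := by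
  calc x ^ n / (Nat.factorial n : ℝ)
      ≤ ∑ i ∈ Finset.range (n + 1), x ^ i / (Nat.factorial i : ℝ) := by
        apply Finset.single_le_sum (f := fun i => x ^ i / (Nat.factorial i : ℝ))
        · intro i _; positivity
        · exact Finset.self_mem_range_succ n
    _ ≤ Real.exp x := Real.sum_le_exp_of_nonneg hx _

/-- For every positive integer `k`,
`∑_{k/2 ≤ l ≤ k} k^l / ((k−l)! (2l−k)!) ≤ 2 (2e²)^k`. -/
theorem statement15 (k : ℕ) (hk : 1 ≤ k) :
    ∑ l ∈ Finset.filter (fun l => k ≤ 2 * l) (Finset.range (k + 1)),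
        (k : ℝ) ^ l / ((Nat.factorial (k - l) : ℝ) * (Nat.factorial (2 * l - k) : ℝ)) ≤
      2 * (2 * Real.exp 1 ^ 2) ^ k := by
  have hk0 : (0 : ℝ) ≤ (k : ℝ) := Nat.cast_nonneg k
  have hB : ∀ l ∈ Finset.filter (fun l => k ≤ 2 * l) (Finset.range (k + 1)),
      (k : ℝ) ^ l / ((Nat.factorial (k - l) : ℝ) * (Nat.factorial (2 * l - k) : ℝ))
        ≤ (Real.exp 1 ^ 2) ^ k := by
    intro l hl
    simp only [Finset.mem_filter, Finset.mem_range] at hl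
    have h1 : l = (k - l) + (2 * l - k) := by omega
    calc (k : ℝ) ^ l / ((Nat.factorial (k - l) : ℝ) * (Nat.factorial (2 * l - k) : ℝ))
        = ((k : ℝ) ^ (k - l) / (Nat.factorial (k - l) : ℝ)) *
          ((k : ℝ) ^ (2 * l - k) / (Nat.factorial (2 * l - k) : ℝ)) := by
          rw [show (k:ℝ)^l = (k:ℝ)^(k-l) * (k:ℝ)^(2*l-k) by rw [← pow_add, ← h1]]
          ring
      _ ≤ Real.exp k * Real.exp k := by
          have f1 : (0:ℝ) < Nat.factorial (k - l) := by positivity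
          have f2 : (0:ℝ) < Nat.factorial (2 * l - k) := by positivity
          apply mul_le_mul (aux_pow_div_fac_le _ hk0 _) (aux_pow_div_fac_le _ hk0 _)
          · positivity
          · exact (Real.exp_pos _).le
      _ = (Real.exp 1 ^ 2) ^ k := by
          rw [← Real.exp_add, ← pow_mul, mul_comm 2 k, pow_mul, Real.exp_one_pow]
          rw [← Real.exp_nat_mul]
          push_cast; ring_nf
  have hsum := Finset.sum_le_card_nsmul _ _ _ hB
  have hcard : (Finset.filter (fun l => k ≤ 2 * l) (Finset.range (k + 1))).card ≤ k + 1 := by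
    calc _ ≤ (Finset.range (k + 1)).card := Finset.card_le_card (Finset.filter_subset _ _)
      _ = k + 1 := Finset.card_range _
  have hpos : (0 : ℝ) ≤ (Real.exp 1 ^ 2) ^ k := by positivity
  calc ∑ l ∈ Finset.filter (fun l => k ≤ 2 * l) (Finset.range (k + 1)),
        (k : ℝ) ^ l / ((Nat.factorial (k - l) : ℝ) * (Nat.factorial (2 * l - k) : ℝ))
      ≤ (Finset.filter (fun l => k ≤ 2 * l) (Finset.range (k + 1))).card •
          (Real.exp 1 ^ 2) ^ k := hsum
    _ = ((Finset.filter (fun l => k ≤ 2 * l) (Finset.range (k + 1))).card : ℝ) *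
          (Real.exp 1 ^ 2) ^ k := nsmul_eq_mul _ _
    _ ≤ ((k : ℝ) + 1) * (Real.exp 1 ^ 2) ^ k := by
        apply mul_le_mul_of_nonneg_right _ hpos
        exact_mod_cast hcard
    _ ≤ (2 * 2 ^ k) * (Real.exp 1 ^ 2) ^ k := by
        apply mul_le_mul_of_nonneg_right _ hpos
        have : k + 1 ≤ 2 * 2 ^ k := by
          have := Nat.lt_two_pow_self (n := k)
          omega
        exact_mod_cast this
    _ = 2 * (2 * Real.exp 1 ^ 2) ^ k := by
        rw [mul_pow]; ring
end

section
/- Let â be an admissible cutoff function with â ≥ 0. For n ≥ 1, define the two-dimensional tensor-product Legendre kernel L_n(x,y) := ∑_{m=0}^∞ â(m/n) · ∑_{ν_1+ν_2=m} P̃_{ν_1}(x_1)·P̃_{ν_2}(x_2)·P̃_{ν_1}(y_1)·P̃_{ν_2}(y_2) for x = (x_1,x_2), y = (y_1,y_2) ∈ [−1,1]². Then L_n((1,−1),(1,1)) = (1/4)·∑_{j=0}^∞ â(2j/n) for every n ≥ 1, and consequently lim_{n→∞} n^{−1}·L_n((1,−1),(1,1)) = (1/8)·∫_0^∞ â(t)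 dt; in particular, if â ≢ 0 this limit is strictly positive, so the kernels L_n are not localized at the off-diagonal point ((1,−1),(1,1)). -/
noncomputable section

open Real MeasureTheory Filter

/-- Admissible cutoff function of type (a): smooth on `[0,∞)`, `supp â ⊆ [0,2]`,
and `â ≡ 1` on `[0,1]`. -/
def IsCutoffA (a : ℝ → ℝ) : Prop :=
  ContDiffOn ℝ (⊤ : ℕ∞) a (Set.Ici 0) ∧ (∀ t ∈ Set.Icc (0:ℝ) 1, a t = 1) ∧
    ∀ t : ℝ, 2 < t → a t = 0

/-- Admissible cutoff function of type (b): smooth on `[0,∞)` with `supp â ⊆ [1/2,2]`. -/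
def IsCutoffB (a : ℝ → ℝ) : Prop :=
  ContDiffOn ℝ (⊤ : ℕ∞) a (Set.Ici 0) ∧ (∀ t : ℝ, 0 ≤ t → t < 1/2 → a t = 0) ∧
    ∀ t : ℝ, 2 < t → a t = 0

/-- Admissible cutoff function of type (c): type (b) and `â(t)² + â(t/2)² = 1` on `[1,2]`. -/
def IsCutoffC (a : ℝ → ℝ) : Prop :=
  IsCutoffB a ∧ ∀ t ∈ Set.Icc (1:ℝ) 2, a t ^ 2 + a (t / 2) ^ 2 = 1

/-- Admissible cutoff function (of type (a), (b) or (c)). -/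
def IsCutoff (a : ℝ → ℝ) : Prop := IsCutoffA a ∨ IsCutoffB a ∨ IsCutoffC a

/-- The Legendre polynomial `P_n(x) = (1/(n! 2^n)) (d/dx)^n (x²−1)^n`. -/
def legendreP (n : ℕ) (x : ℝ) : ℝ :=
  (1 / ((Nat.factorial n : ℝ) * 2 ^ n)) * iteratedDeriv n (fun y : ℝ => (y ^ 2 - 1) ^ n) x

/-- The normalized Legendre polynomial `P̃_n = (n+1/2)^{1/2} P_n`. -/
def legendrePt (n : ℕ) (x : ℝ) : ℝ :=
  Real.sqrt ((n : ℝ) + 1 / 2) * legendreP n x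

/-- The 2-d tensor product Legendre kernel
`L_n(x,y) = ∑_m â(m/n) ∑_{ν₁+ν₂=m} P̃_{ν₁}(x₁) P̃_{ν₂}(x₂) P̃_{ν₁}(y₁) P̃_{ν₂}(y₂)`. -/
def legendreKernel2 (a : ℝ → ℝ) (n : ℕ) (x₁ x₂ y₁ y₂ : ℝ) : ℝ :=
  ∑' m : ℕ, a ((m : ℝ) / (n : ℝ)) *
    ∑ p ∈ Finset.HasAntidiagonal.antidiagonal m,
      legendrePt p.1 x₁ * legendrePt p.2 x₂ * legendrePt p.1 y₁ * legendrePt p.2 y₂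

lemma iteratedDeriv_polyEval (n : ℕ) (p : Polynomial ℝ) :
    iteratedDeriv n (fun y : ℝ => p.eval y) = fun x => (Polynomial.derivative^[n] p).eval x := by
  induction n with
  | zero => simp
  | succ n ih =>
    rw [iteratedDeriv_succ, ih]
    funext x
    rw [Function.iterate_succ_apply']
    exact Polynomial.deriv _

open Polynomial Finset in

lemma eval_iter_deriv_pow_mul (n : ℕ) (c : ℝ) (q : Polynomial ℝ) :
    (Polynomial.derivative^[n] ((X - C c) ^ n * q)).eval c = (n.factorial : ℝ) * q.eval c := by
  rw [Polynomial.iterate_derivative_mul, Polynomial.eval_finset_sum]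
  rw [Finset.sum_eq_single_of_mem 0 (Finset.mem_range.mpr n.succ_pos)]
  · simp [Polynomial.iterate_derivative_X_sub_pow_self]
  · intro k hk hk0
    rw [Polynomial.iterate_derivative_X_sub_pow, eval_smul, eval_mul, eval_smul, eval_pow,
      Nat.sub_sub_self (Finset.mem_range_succ_iff.mp hk), eval_sub, eval_X, eval_C, sub_self,
      zero_pow hk0, smul_zero, zero_mul, smul_zero]

open Polynomial in

lemma sq_sub_one_pow (n : ℕ) :
    (fun y : ℝ => (y ^ 2 - 1) ^ n) = fun y => (((X - C (1:ℝ)) ^ n * (X - C (-1:ℝ)) ^ n)).eval y := by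
  funext y
  simp only [Polynomial.eval_mul, Polynomial.eval_pow, Polynomial.eval_sub, Polynomial.eval_X,
    Polynomial.eval_C, ← mul_pow]
  ring_nf

lemma legendreP_one (n : ℕ) : legendreP n 1 = 1 := by
  rw [legendreP, sq_sub_one_pow, iteratedDeriv_polyEval]
  beta_reduce
  rw [eval_iter_deriv_pow_mul]
  simp only [Polynomial.eval_pow, Polynomial.eval_sub, Polynomial.eval_X, Polynomial.eval_C]
  have hn : (Nat.factorial n : ℝ) ≠ 0 := Nat.cast_ne_zero.mpr n.factorial_ne_zero
  field_simp
  norm_num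

open Polynomial in

lemma legendreP_neg_one (n : ℕ) : legendreP n (-1) = (-1) ^ n := by
  have hcomm : ((X - C (1:ℝ)) ^ n * (X - C (-1:ℝ)) ^ n) = ((X - C (-1:ℝ)) ^ n * (X - C (1:ℝ)) ^ n) := mul_comm _ _
  rw [legendreP, sq_sub_one_pow, hcomm, iteratedDeriv_polyEval]
  beta_reduce
  rw [eval_iter_deriv_pow_mul]
  have hn : (Nat.factorial n : ℝ) ≠ 0 := Nat.cast_ne_zero.mpr n.factorial_ne_zero
  simp only [Polynomial.eval_pow, Polynomial.eval_sub, Polynomial.eval_X, Polynomial.eval_C]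
  have : ((-1:ℝ) - 1) ^ n = (-1)^n * 2^n := by
    rw [← neg_one_mul, ← mul_pow]; norm_num
  rw [this]
  field_simp

lemma legendrePt_one (n : ℕ) : legendrePt n 1 = Real.sqrt ((n:ℝ) + 1/2) := by
  rw [legendrePt, legendreP_one, mul_one]

lemma legendrePt_neg_one (n : ℕ) : legendrePt n (-1) = (-1)^n * Real.sqrt ((n:ℝ) + 1/2) := by
  rw [legendrePt, legendreP_neg_one, mul_comm]

lemma sumA (m : ℕ) : ∑ k ∈ Finset.range (m+1), (-1:ℝ)^k * ((k:ℝ) + 1/2)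
    = (-1)^m * ((m:ℝ)+1)/2 := by
  induction m with
  | zero => norm_num
  | succ m ih =>
    rw [Finset.sum_range_succ, ih]
    push_cast
    ring

lemma sumB (m : ℕ) : ∑ k ∈ Finset.range (m+1), (-1:ℝ)^k * ((k:ℝ) + 1/2)^2
    = (-1)^m * ((m:ℝ)+1)^2/2 - (1+(-1:ℝ)^m)/8 := by
  induction m with
  | zero => norm_num
  | succ m ih =>
    rw [Finset.sum_range_succ, ih]
    push_cast
    ring

lemma sumS (m : ℕ) : ∑ k ∈ Finset.range (m+1),
    (-1:ℝ)^k * (((k:ℝ)+1/2) * (((m:ℝ)-(k:ℝ))+1/2)) = (1+(-1:ℝ)^m)/8 := by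
  have hcongr : ∀ k ∈ Finset.range (m+1), (-1:ℝ)^k * (((k:ℝ)+1/2) * (((m:ℝ)-(k:ℝ))+1/2))
      = ((m:ℝ)+1) * ((-1)^k * ((k:ℝ)+1/2)) - (-1)^k * ((k:ℝ)+1/2)^2 := by
    intro k _; ring
  rw [Finset.sum_congr rfl hcongr, Finset.sum_sub_distrib, ← Finset.mul_sum, sumA, sumB]
  ring

lemma innerSum18 (m : ℕ) :
    ∑ p ∈ Finset.HasAntidiagonal.antidiagonal m,
      legendrePt p.1 1 * legendrePt p.2 (-1) * legendrePt p.1 1 * legendrePt p.2 1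
    = (1 + (-1:ℝ)^m)/8 := by
  rw [Finset.Nat.sum_antidiagonal_eq_sum_range_succ
    (fun i j => legendrePt i 1 * legendrePt j (-1) * legendrePt i 1 * legendrePt j 1)]
  have hcongr : ∀ k ∈ Finset.range (m+1),
      legendrePt k 1 * legendrePt (m-k) (-1) * legendrePt k 1 * legendrePt (m-k) 1
      = (-1:ℝ)^m * ((-1:ℝ)^k * (((k:ℝ)+1/2) * (((m:ℝ)-(k:ℝ))+1/2))) := by
    intro k hk
    have hk' : k ≤ m := Finset.mem_range_succ_iff.mp hk
    have e1 : legendrePt k 1 * legendrePt k 1 = (k:ℝ)+1/2 := by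
      rw [legendrePt_one, Real.mul_self_sqrt (by positivity)]
    have e2 : legendrePt (m-k) (-1) * legendrePt (m-k) 1
        = (-1:ℝ)^(m-k) * (((m-k:ℕ):ℝ)+1/2) := by
      rw [legendrePt_neg_one, legendrePt_one, mul_assoc, Real.mul_self_sqrt (by positivity)]
    have hkk : (-1:ℝ)^k * (-1)^k = 1 := by
      rw [← pow_add]; exact Even.neg_one_pow ⟨k, rfl⟩
    have hmk : (-1:ℝ)^(m-k) * (-1)^k = (-1)^m := by
      rw [← pow_add, Nat.sub_add_cancel hk']
    have h3 : (-1:ℝ)^(m-k) = (-1)^m * (-1)^k := by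
      calc (-1:ℝ)^(m-k) = (-1:ℝ)^(m-k) * ((-1)^k * (-1)^k) := by rw [hkk, mul_one]
        _ = (-1)^m * (-1)^k := by rw [← mul_assoc, hmk]
    have hcast : ((m-k:ℕ):ℝ) = (m:ℝ) - (k:ℝ) := Nat.cast_sub hk'
    calc legendrePt k 1 * legendrePt (m-k) (-1) * legendrePt k 1 * legendrePt (m-k) 1
        = (legendrePt k 1 * legendrePt k 1) * (legendrePt (m-k) (-1) * legendrePt (m-k) 1) := by
          ring
      _ = ((k:ℝ)+1/2) * ((-1:ℝ)^(m-k) * (((m-k:ℕ):ℝ)+1/2)) := by rw [e1, e2]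
      _ = (-1:ℝ)^m * ((-1:ℝ)^k * (((k:ℝ)+1/2) * (((m:ℝ)-(k:ℝ))+1/2))) := by
          rw [h3, hcast]; ring
  rw [Finset.sum_congr rfl hcongr, ← Finset.mul_sum, sumS]
  have hmm : (-1:ℝ)^m * (-1)^m = 1 := by
    rw [← pow_add]; exact Even.neg_one_pow ⟨m, rfl⟩
  linear_combination hmm/8

lemma cutoff_props {a : ℝ → ℝ} (ha : IsCutoff a) :
    ContDiffOn ℝ (⊤ : ℕ∞) a (Set.Ici 0) ∧ ∀ t : ℝ, 2 < t → a t = 0 := by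
  rcases ha with ⟨h1,_,h3⟩ | ⟨h1,_,h3⟩ | ⟨⟨h1,_,h3⟩,_⟩ <;> exact ⟨h1,h3⟩

lemma kernel_eq (a : ℝ → ℝ) (ha0 : ∀ t : ℝ, 2 < t → a t = 0) (n : ℕ) (hn : 1 ≤ n) :
    legendreKernel2 a n 1 (-1) 1 1 = (1 / 4) * ∑' j : ℕ, a ((2 * (j : ℝ)) / (n : ℝ)) := by
  have hnR : (0:ℝ) < n := by exact_mod_cast hn
  -- vanishing beyond 2n
  have hzero : ∀ m : ℕ, 2 * n < m → a ((m:ℝ)/(n:ℝ)) = 0 := by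
    intro m hm
    apply ha0
    rw [lt_div_iff₀ hnR]
    exact_mod_cast (by omega : 2 * n < m)
  set g : ℕ → ℝ := fun m => a ((m:ℝ)/(n:ℝ)) * ((1 + (-1:ℝ)^m)/8) with hg
  have hker : legendreKernel2 a n 1 (-1) 1 1 = ∑' m, g m := by
    unfold legendreKernel2
    exact tsum_congr fun m => by rw [innerSum18]
  have hgz : ∀ m ∉ Finset.range (2*n+1), g m = 0 := by
    intro m hm
    have : 2*n < m := by simpa using Finset.mem_range.not.mp hm
    rw [hg]; simp only
    rw [hzero m this, zero_mul]
  have hgsum : Summable g := summable_of_ne_finset_zero hgz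
  have hjz : ∀ j ∉ Finset.range (n+1), a ((2*(j:ℝ))/(n:ℝ)) = 0 := by
    intro j hj
    have hjn : n < j := by simpa using Finset.mem_range.not.mp hj
    apply ha0
    rw [lt_div_iff₀ hnR]
    have : (j:ℝ) > n := by exact_mod_cast hjn
    nlinarith
  have hgeven : ∀ k : ℕ, g (2*k) = a ((2*(k:ℝ))/(n:ℝ)) * (1/4) := by
    intro k
    rw [hg]; simp only
    have h1 : (-1:ℝ)^(2*k) = 1 := by
      rw [pow_mul]; norm_num
    rw [h1]
    push_cast
    ring_nf
  have hgodd : ∀ k : ℕ, g (2*k+1) = 0 := by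
    intro k
    rw [hg]; simp only
    have h1 : (-1:ℝ)^(2*k+1) = -1 := by
      rw [pow_succ, pow_mul]; norm_num
    rw [h1]
    norm_num
  have hse : Summable (fun k => g (2*k)) := by
    apply summable_of_ne_finset_zero (s := Finset.range (n+1))
    intro k hk
    rw [hgeven, hjz k hk, zero_mul]
  have hso : Summable (fun k => g (2*k+1)) := by
    apply summable_of_ne_finset_zero (s := (∅ : Finset ℕ))
    intro k _
    exact hgodd k
  have hsplit := tsum_even_add_odd hse hso
  have hodd0 : ∑' k, g (2*k+1) = 0 := by
    rw [tsum_congr hgodd]; exact tsum_zero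
  rw [hker, ← hsplit, hodd0, add_zero, tsum_congr hgeven, tsum_mul_right]
  ring

lemma exists_lip {a : ℝ → ℝ} (hs : ContDiffOn ℝ (⊤ : ℕ∞) a (Set.Ici 0)) :
    ∃ K : ℝ, 0 ≤ K ∧ ∀ x ∈ Set.Icc (0:ℝ) 2, ∀ y ∈ Set.Icc (0:ℝ) 2, |a x - a y| ≤ K * |x - y| := by
  have h1 : ContDiffOn ℝ 1 a (Set.Icc (0:ℝ) 2) :=
    (hs.of_le (by exact_mod_cast le_top)).mono (Set.Icc_subset_Ici_self)
  have hu : UniqueDiffOn ℝ (Set.Icc (0:ℝ) 2) := uniqueDiffOn_Icc (by norm_num)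
  have hdc : ContinuousOn (derivWithin a (Set.Icc (0:ℝ) 2)) (Set.Icc (0:ℝ) 2) :=
    h1.continuousOn_derivWithin hu le_rfl
  obtain ⟨C, hC⟩ := isCompact_Icc.exists_bound_of_continuousOn hdc
  set K : NNReal := ⟨max C 0, le_max_right _ _⟩ with hKdef
  have hlip : LipschitzOnWith K a (Set.Icc (0:ℝ) 2) := by
    apply (convex_Icc (0:ℝ) 2).lipschitzOnWith_of_nnnorm_derivWithin_le
      (h1.differentiableOn one_ne_zero)
    intro x hx
    rw [← NNReal.coe_le_coe, coe_nnnorm]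
    exact le_trans (hC x hx) (le_max_left _ _)
  refine ⟨max C 0, le_max_right _ _, fun x hx y hy => ?_⟩
  have := hlip.dist_le_mul x hx y hy
  rwa [Real.dist_eq, Real.dist_eq] at this

lemma riemann_bound {a : ℝ → ℝ} (hc : ContinuousOn a (Set.Ici 0)) {K : ℝ} (hK : 0 ≤ K)
    (hlip : ∀ x ∈ Set.Icc (0:ℝ) 2, ∀ y ∈ Set.Icc (0:ℝ) 2, |a x - a y| ≤ K * |x - y|)
    (n : ℕ) (hn : 1 ≤ n) :
    |(∑ j ∈ Finset.range n, (2/(n:ℝ)) * a (2*(j:ℝ)/(n:ℝ))) - ∫ t in (0:ℝ)..2, a t|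
      ≤ 4*K/(n:ℝ) := by
  have hnR : (0:ℝ) < n := by exact_mod_cast hn
  set x : ℕ → ℝ := fun j => 2*(j:ℝ)/(n:ℝ) with hx
  have hxmem : ∀ j : ℕ, j ≤ n → x j ∈ Set.Icc (0:ℝ) 2 := by
    intro j hj
    constructor
    · positivity
    · rw [hx]; simp only
      rw [div_le_iff₀ hnR]
      have : (j:ℝ) ≤ n := by exact_mod_cast hj
      linarith
  have hxle : ∀ j : ℕ, x j ≤ x (j+1) := by
    intro j
    rw [hx]; simp only
    push_cast
    gcongr
    linarith
  have hgap : ∀ j : ℕ, x (j+1) - x j = 2/(n:ℝ) := by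
    intro j
    rw [hx]; simp only
    push_cast
    field_simp
    ring
  have hint : ∀ k : ℕ, k < n → IntervalIntegrable a volume (x k) (x (k+1)) := by
    intro k hk
    apply ContinuousOn.intervalIntegrable
    apply hc.mono
    rw [Set.uIcc_of_le (hxle k)]
    intro t ht
    exact le_trans (hxmem k hk.le).1 ht.1
  have hadj := intervalIntegral.sum_integral_adjacent_intervals hint
  have hx0 : x 0 = 0 := by rw [hx]; simp
  have hxn : x n = 2 := by rw [hx]; field_simp
  rw [hx0, hxn] at hadj
  have hterm : ∀ j ∈ Finset.range n,
      |(2/(n:ℝ)) * a (x j) - ∫ t in (x j)..(x (j+1)), a t| ≤ 4*K/(n:ℝ)^2 := by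
    intro j hj
    have hjn : j < n := Finset.mem_range.mp hj
    have hdiff : (2/(n:ℝ)) * a (x j) - ∫ t in (x j)..(x (j+1)), a t
        = ∫ t in (x j)..(x (j+1)), (a (x j) - a t) := by
      rw [intervalIntegral.integral_sub (intervalIntegrable_const) (hint j hjn),
        intervalIntegral.integral_const, hgap j, smul_eq_mul]
    rw [hdiff, ← Real.norm_eq_abs]
    have hb : ∀ t ∈ Set.uIoc (x j) (x (j+1)), ‖a (x j) - a t‖ ≤ K * (2/(n:ℝ)) := by
      intro t ht
      rw [Set.uIoc_of_le (hxle j)] at ht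
      have htIcc : t ∈ Set.Icc (0:ℝ) 2 := by
        constructor
        · exact le_trans (hxmem j hjn.le).1 ht.1.le
        · exact le_trans ht.2 (hxmem (j+1) hjn).2
      rw [Real.norm_eq_abs]
      refine le_trans (hlip _ (hxmem j hjn.le) _ htIcc) ?_
      have h1 : |x j - t| ≤ 2/(n:ℝ) := by
        rw [abs_le]
        constructor
        · have := ht.2; have := hgap j; linarith
        · have := ht.1.le; linarith [div_nonneg (by norm_num : (0:ℝ) ≤ 2) hnR.le]
      exact mul_le_mul_of_nonneg_left h1 hK
    have := intervalIntegral.norm_integral_le_of_norm_le_const hb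
    refine le_trans this ?_
    have habs : |x (j+1) - x j| = 2/(n:ℝ) := by
      rw [hgap j, abs_of_nonneg (by positivity)]
    rw [habs]
    rw [show K * (2/(n:ℝ)) * (2/(n:ℝ)) = 4*K/(n:ℝ)^2 by field_simp; ring]
  calc |(∑ j ∈ Finset.range n, (2/(n:ℝ)) * a (x j)) - ∫ t in (0:ℝ)..2, a t|
      = |∑ j ∈ Finset.range n, ((2/(n:ℝ)) * a (x j) - ∫ t in (x j)..(x (j+1)), a t)| := by
        rw [Finset.sum_sub_distrib, hadj]
    _ ≤ ∑ j ∈ Finset.range n, |(2/(n:ℝ)) * a (x j) - ∫ t in (x j)..(x (j+1)), a t| :=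
        Finset.abs_sum_le_sum_abs _ _
    _ ≤ ∑ _j ∈ Finset.range n, 4*K/(n:ℝ)^2 := Finset.sum_le_sum hterm
    _ = n * (4*K/(n:ℝ)^2) := by rw [Finset.sum_const, Finset.card_range, nsmul_eq_mul]
    _ = 4*K/(n:ℝ) := by field_simp

lemma a_two_eq_zero {a : ℝ → ℝ} (hc : ContinuousOn a (Set.Ici 0))
    (ha0 : ∀ t : ℝ, 2 < t → a t = 0) : a 2 = 0 := by
  have h1 : ContinuousWithinAt a (Set.Ioi 2) 2 :=
    (hc 2 (by norm_num)).mono (fun t ht => le_of_lt (lt_of_lt_of_le (by norm_num : (0:ℝ) < 2) ht.le))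
  have h2 : Tendsto a (nhdsWithin 2 (Set.Ioi 2)) (nhds 0) := by
    apply Tendsto.congr' _ tendsto_const_nhds
    filter_upwards [self_mem_nhdsWithin] with t ht
    exact (ha0 t ht).symm
  exact tendsto_nhds_unique h1 h2

lemma integrableOn_Ioi {a : ℝ → ℝ} (hc : ContinuousOn a (Set.Ici 0))
    (ha0 : ∀ t : ℝ, 2 < t → a t = 0) : IntegrableOn a (Set.Ioi (0:ℝ)) := by
  have hIcc : IntegrableOn a (Set.Icc (0:ℝ) 2) :=
    (hc.mono (fun t ht => ht.1)).integrableOn_Icc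
  have h1 : IntegrableOn a (Set.Ioc (0:ℝ) 2) := hIcc.mono_set Set.Ioc_subset_Icc_self
  have h2 : IntegrableOn a (Set.Ioi (2:ℝ)) := by
    exact (integrableOn_congr_fun (g := fun _ => (0:ℝ))
      (fun t ht => ha0 t ht) measurableSet_Ioi).mpr (integrableOn_zero)
  have hU : Set.Ioi (0:ℝ) = Set.Ioc 0 2 ∪ Set.Ioi 2 := (Set.Ioc_union_Ioi_eq_Ioi (by norm_num)).symm
  rw [hU]
  exact h1.union h2

lemma integral_Ioi_eq {a : ℝ → ℝ} (hc : ContinuousOn a (Set.Ici 0))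
    (ha0 : ∀ t : ℝ, 2 < t → a t = 0) :
    (∫ t in Set.Ioi (0:ℝ), a t) = ∫ t in (0:ℝ)..2, a t := by
  have hIcc : IntegrableOn a (Set.Icc (0:ℝ) 2) :=
    (hc.mono (fun t ht => ht.1)).integrableOn_Icc
  have h1 : IntegrableOn a (Set.Ioc (0:ℝ) 2) := hIcc.mono_set Set.Ioc_subset_Icc_self
  have h2 : IntegrableOn a (Set.Ioi (2:ℝ)) := by
    exact (integrableOn_congr_fun (g := fun _ => (0:ℝ))
      (fun t ht => ha0 t ht) measurableSet_Ioi).mpr (integrableOn_zero)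
  have hU : Set.Ioi (0:ℝ) = Set.Ioc 0 2 ∪ Set.Ioi 2 := (Set.Ioc_union_Ioi_eq_Ioi (by norm_num)).symm
  have hdisj : Disjoint (Set.Ioc (0:ℝ) 2) (Set.Ioi 2) := by
    apply Set.disjoint_left.mpr
    intro t ht ht2
    exact absurd ht.2 (not_le.mpr ht2)
  rw [hU, setIntegral_union hdisj measurableSet_Ioi h1 h2]
  have hz : (∫ t in Set.Ioi (2:ℝ), a t) = 0 := by
    rw [setIntegral_congr_fun measurableSet_Ioi (fun t ht => ha0 t ht)]
    simp
  rw [hz, add_zero, intervalIntegral.integral_of_le (by norm_num)]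

lemma integral_pos18 {a : ℝ → ℝ} (hc : ContinuousOn a (Set.Ici 0))
    (ha0 : ∀ t : ℝ, 2 < t → a t = 0) (hpos : ∀ t ∈ Set.Ici (0:ℝ), 0 ≤ a t)
    {t₀ : ℝ} (ht₀ : t₀ ∈ Set.Ici (0:ℝ)) (hne : a t₀ ≠ 0) :
    0 < ∫ t in Set.Ioi (0:ℝ), a t := by
  have ht₀' : (0:ℝ) ≤ t₀ := ht₀
  have hat : 0 < a t₀ := lt_of_le_of_ne (hpos t₀ ht₀) (Ne.symm hne)
  have hcw : ContinuousWithinAt a (Set.Ici 0) t₀ := hc t₀ ht₀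
  have hev : ∀ᶠ t in nhdsWithin t₀ (Set.Ici 0), a t₀/2 < a t :=
    hcw.eventually (eventually_gt_nhds (by linarith))
  obtain ⟨ε, hε, hsub⟩ := Metric.mem_nhdsWithin_iff.mp hev
  set s : Set ℝ := Set.Ioo t₀ (t₀ + ε) with hs
  have hsval : ∀ t ∈ s, a t₀/2 < a t := by
    intro t ht
    apply hsub
    refine ⟨?_, le_trans ht₀' ht.1.le⟩
    rw [Metric.mem_ball, Real.dist_eq, abs_lt]
    constructor <;> [linarith [ht.1]; linarith [ht.2]]
  have hsm : s ⊆ Set.Ioi (0:ℝ) := fun t ht => lt_of_le_of_lt ht₀' ht.1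
  have hint := integrableOn_Ioi hc ha0
  have h1 : (∫ t in s, a t) ≤ ∫ t in Set.Ioi (0:ℝ), a t := by
    apply setIntegral_mono_set hint
    · exact (ae_restrict_iff' measurableSet_Ioi).mpr (ae_of_all _ (fun t ht => hpos t (Set.mem_Ici.mpr (Set.mem_Ioi.mp ht).le)))
    · exact HasSubset.Subset.eventuallyLE hsm
  have h2 : (a t₀/2) * (volume s).toReal ≤ ∫ t in s, a t := by
    apply setIntegral_ge_of_const_le_real measurableSet_Ioo
    · simp [Real.volume_Ioo]
    · exact fun t ht => (hsval t ht).le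
    · exact hint.mono_set hsm
  have hvol : (volume s).toReal = ε := by
    show (volume (Set.Ioo t₀ (t₀ + ε))).toReal = ε
    rw [Real.volume_Ioo, ENNReal.toReal_ofReal (by linarith)]
    ring
  rw [hvol] at h2
  have : 0 < (a t₀/2) * ε := by positivity
  linarith

/-- For a nonnegative admissible cutoff `â`, the tensor product Legendre kernel satisfies
`L_n((1,−1),(1,1)) = (1/4) ∑ⱼ â(2j/n)`, hence `n⁻¹ L_n((1,−1),(1,1)) → (1/8)∫₀^∞ â`,
which is strictly positive when `â ≢ 0`: the kernels are not localized at this off-diagonal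
point. -/
theorem statement18 (a : ℝ → ℝ) (ha : IsCutoff a) (hpos : ∀ t ∈ Set.Ici (0:ℝ), 0 ≤ a t) :
    (∀ n : ℕ, 1 ≤ n →
      legendreKernel2 a n 1 (-1) 1 1 = (1 / 4) * ∑' j : ℕ, a ((2 * (j : ℝ)) / (n : ℝ))) ∧
    Tendsto (fun n : ℕ => ((n : ℝ))⁻¹ * legendreKernel2 a n 1 (-1) 1 1) atTop
      (nhds ((1 / 8) * ∫ t in Set.Ioi (0:ℝ), a t)) ∧
    ((∃ t ∈ Set.Ici (0:ℝ), a t ≠ 0) → 0 < (1 / 8) * ∫ t in Set.Ioi (0:ℝ), a t) := by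
  obtain ⟨hsmooth, ha0⟩ := cutoff_props ha
  have hc : ContinuousOn a (Set.Ici 0) := hsmooth.continuousOn
  have ha2 : a 2 = 0 := a_two_eq_zero hc ha0
  have hIeq : (∫ t in Set.Ioi (0:ℝ), a t) = ∫ t in (0:ℝ)..2, a t := integral_Ioi_eq hc ha0
  refine ⟨fun n hn => kernel_eq a ha0 n hn, ?_, ?_⟩
  · obtain ⟨K, hK, hlip⟩ := exists_lip hsmooth
    set c : ℝ := ∫ t in (0:ℝ)..2, a t with hcdef
    set R : ℕ → ℝ := fun n => ∑ j ∈ Finset.range n, (2/(n:ℝ)) * a (2*(j:ℝ)/(n:ℝ)) with hR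
    have hRt : Tendsto R atTop (nhds c) := by
      rw [← tendsto_sub_nhds_zero_iff]
      apply squeeze_zero_norm' ?_ (tendsto_const_div_atTop_nhds_zero_nat (4*K))
      filter_upwards [eventually_ge_atTop 1] with n hn
      rw [Real.norm_eq_abs]
      exact riemann_bound hc hK hlip n hn
    have hfinal : Tendsto (fun n : ℕ => (1/8 : ℝ) * R n) atTop (nhds ((1/8)*c)) :=
      hRt.const_mul _
    have hEq : ∀ n : ℕ, 1 ≤ n →
        ((n:ℝ))⁻¹ * legendreKernel2 a n 1 (-1) 1 1 = (1/8) * R n := by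
      intro n hn
      have hnR : (0:ℝ) < n := by exact_mod_cast hn
      rw [kernel_eq a ha0 n hn]
      have hjz : ∀ j ∉ Finset.range (n+1), a ((2*(j:ℝ))/(n:ℝ)) = 0 := by
        intro j hj
        have hjn : n < j := by simpa using Finset.mem_range.not.mp hj
        apply ha0
        rw [lt_div_iff₀ hnR]
        have : (n:ℝ) < j := by exact_mod_cast hjn
        nlinarith
      rw [tsum_eq_sum hjz, Finset.sum_range_succ]
      have h2n : (2*(n:ℝ))/(n:ℝ) = 2 := by field_simp
      rw [h2n, ha2, add_zero]
      have hRn : R n = (2/(n:ℝ)) * ∑ j ∈ Finset.range n, a (2*(j:ℝ)/(n:ℝ)) := by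
        rw [hR]; simp only; rw [Finset.mul_sum]
      rw [hRn]
      ring
    rw [hIeq]
    apply Tendsto.congr' _ hfinal
    filter_upwards [eventually_ge_atTop 1] with n hn
    exact (hEq n hn).symm
  · rintro ⟨t₀, ht₀, hne⟩
    have := integral_pos18 hc ha0 hpos ht₀ hne
    linarith

end
end

section
/- Let â be an admissible cutoff function and for n ≥ 1 define the two-dimensional tensor-product Chebyshev kernel L_n(x,y) := ∑_{m=0}^∞ â(m/n)·P̃_m(x,y) where P̃_m(x,y) := ∑_{j=0}^m T̃_j(x_1)·T̃_{m−j}(x_2)·T̃_j(y_1)·T̃_{m−j}(y_2) for x = (x_1,x_2), y = (y_1,y_2) ∈ [−1,1]². Then P̃_m((1,−1),(1,1)) = 1/π² if m = 0 and P̃_m((1,−1),(1,1)) = 0 if m ≥ 1, and consequently L_n((1,−1),(1,1)) = â(0)/π² for every n ≥ 1. -/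
noncomputable section

open Real

/-- Normalized Chebyshev polynomials of the first kind:
`T̃₀ = 1/√π`, `T̃ⱼ(x) = √(2/π) cos (j arccos x)` for `j ≥ 1`. -/
def chebT (j : ℕ) (x : ℝ) : ℝ :=
  if j = 0 then Real.sqrt (1 / Real.pi)
  else Real.sqrt (2 / Real.pi) * Real.cos ((j : ℝ) * Real.arccos x)

/-- The 2-d tensor product Chebyshev projection kernel evaluated at
`x = (1,−1)`, `y = (1,1)`:
`P̃_m(x,y) = ∑_{j=0}^m T̃_j(x₁) T̃_{m−j}(x₂) T̃_j(y₁) T̃_{m−j}(y₂)`. -/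
def chebProj2 (m : ℕ) (x₁ x₂ y₁ y₂ : ℝ) : ℝ :=
  ∑ j ∈ Finset.range (m + 1),
    chebT j x₁ * chebT (m - j) x₂ * chebT j y₁ * chebT (m - j) y₂

lemma chebT_one' (j : ℕ) : chebT j 1 = if j = 0 then Real.sqrt (1 / Real.pi)
    else Real.sqrt (2 / Real.pi) := by
  unfold chebT
  rw [Real.arccos_one, mul_zero, Real.cos_zero, mul_one]

lemma chebT_neg_one' (j : ℕ) : chebT j (-1) = if j = 0 then Real.sqrt (1 / Real.pi)
    else Real.sqrt (2 / Real.pi) * (-1) ^ j := by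
  unfold chebT
  rcases eq_or_ne j 0 with h | h
  · simp [h]
  · rw [if_neg h, if_neg h, Real.arccos_neg_one,
      show (j : ℝ) * π = 0 + (j : ℝ) * π by ring, Real.cos_add_nat_mul_pi, Real.cos_zero, mul_one]

lemma term_eq' (j k : ℕ) :
    chebT j 1 * chebT k (-1) * chebT j 1 * chebT k 1 =
      (if j = 0 then 1 / Real.pi else 2 / Real.pi) *
        (if k = 0 then 1 / Real.pi else (2 / Real.pi) * (-1) ^ k) := by
  have h1 : Real.sqrt (1 / Real.pi) * Real.sqrt (1 / Real.pi) = 1 / Real.pi :=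
    Real.mul_self_sqrt (by positivity)
  have h2 : Real.sqrt (2 / Real.pi) * Real.sqrt (2 / Real.pi) = 2 / Real.pi :=
    Real.mul_self_sqrt (by positivity)
  rw [chebT_one', chebT_one', chebT_neg_one']
  split_ifs with hj hk hk
  · linear_combination (Real.sqrt (1 / Real.pi) * Real.sqrt (1 / Real.pi) + 1 / Real.pi) * h1
  · linear_combination ((-1:ℝ)^k * (Real.sqrt (1 / Real.pi) * Real.sqrt (1 / Real.pi))) * h2 +
      ((-1:ℝ)^k * (2 / Real.pi)) * h1
  · linear_combination (Real.sqrt (2 / Real.pi) * Real.sqrt (2 / Real.pi)) * h1 +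
      (1 / Real.pi) * h2
  · linear_combination ((-1:ℝ)^k * (Real.sqrt (2 / Real.pi) * Real.sqrt (2 / Real.pi)) +
      (-1:ℝ)^k * (2 / Real.pi)) * h2

lemma chebProj2_zero' : chebProj2 0 1 (-1) 1 1 = 1 / Real.pi ^ 2 := by
  have h1 : Real.sqrt (1 / Real.pi) * Real.sqrt (1 / Real.pi) = 1 / Real.pi :=
    Real.mul_self_sqrt (by positivity)
  unfold chebProj2
  rw [Finset.sum_range_one, term_eq', if_pos rfl, if_pos (Nat.sub_self 0)]
  rw [pow_two]
  field_simp

lemma chebProj2_pos' (m : ℕ) (hm : 1 ≤ m) : chebProj2 m 1 (-1) 1 1 = 0 := by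
  obtain ⟨m', rfl⟩ : ∃ m', m = m' + 1 := ⟨m - 1, by omega⟩
  unfold chebProj2
  rw [Finset.sum_congr rfl fun j _ => term_eq' j (m' + 1 - j)]
  rw [Finset.sum_range_succ, Finset.sum_range_succ']
  have hmid : ∀ j ∈ Finset.range m',
      (if j + 1 = 0 then (1:ℝ) / Real.pi else 2 / Real.pi) *
        (if m' + 1 - (j + 1) = 0 then 1 / Real.pi
          else (2 / Real.pi) * (-1) ^ (m' + 1 - (j + 1))) =
      (2 / Real.pi) * ((2 / Real.pi) * (-1) ^ (m' - j)) := by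
    intro j hj
    rw [Finset.mem_range] at hj
    rw [show m' + 1 - (j + 1) = m' - j by omega, if_neg (Nat.succ_ne_zero j),
      if_neg (by omega)]
  rw [Finset.sum_congr rfl hmid]
  have hrefl : ∑ j ∈ Finset.range m',
      (2 / Real.pi) * ((2 / Real.pi) * (-1:ℝ) ^ (m' - j)) =
      (2 / Real.pi) * ((2 / Real.pi) * (-(if Even m' then (0:ℝ) else 1))) := by
    rw [← Finset.mul_sum, ← Finset.mul_sum]
    congr 2
    have h0 : ∑ j ∈ Finset.range m', (-1:ℝ) ^ (m' - j)
        = ∑ j ∈ Finset.range m', (-1:ℝ) ^ (j + 1) := by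
      rw [← Finset.sum_range_reflect (fun j => (-1:ℝ) ^ (j + 1)) m']
      refine Finset.sum_congr rfl fun j hj => ?_
      rw [Finset.mem_range] at hj
      rw [show m' - 1 - j + 1 = m' - j by omega]
    rw [h0]
    calc ∑ j ∈ Finset.range m', (-1:ℝ) ^ (j + 1)
        = -∑ j ∈ Finset.range m', (-1:ℝ) ^ j := by
          rw [← Finset.sum_neg_distrib]
          exact Finset.sum_congr rfl fun j _ => by rw [pow_succ]; ring
      _ = -(if Even m' then (0:ℝ) else 1) := by rw [neg_one_geom_sum]
  rw [hrefl]
  rw [if_neg (Nat.succ_ne_zero m'), if_pos rfl, Nat.sub_zero, Nat.sub_self,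
    if_neg (Nat.succ_ne_zero m'), if_pos rfl]
  rcases Nat.even_or_odd m' with he | ho
  · rw [if_pos he, pow_succ, he.neg_one_pow]
    ring
  · rw [if_neg (Nat.not_even_iff_odd.mpr ho), pow_succ, ho.neg_one_pow]
    ring

/-- For the tensor product Chebyshev system, `P̃₀((1,−1),(1,1)) = 1/π²`,
`P̃_m((1,−1),(1,1)) = 0` for `m ≥ 1`, and consequently the tensor product Chebyshev kernel
satisfies `L_n((1,−1),(1,1)) = â(0)/π²` for every admissible cutoff function `â`. -/
theorem statement19 (a : ℝ → ℝ) (ha : IsCutoff a) :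
    chebProj2 0 1 (-1) 1 1 = 1 / Real.pi ^ 2 ∧
    (∀ m : ℕ, 1 ≤ m → chebProj2 m 1 (-1) 1 1 = 0) ∧
    ∀ n : ℕ, 1 ≤ n →
      (∑' m : ℕ, a ((m : ℝ) / (n : ℝ)) * chebProj2 m 1 (-1) 1 1) = a 0 / Real.pi ^ 2 := by
  refine ⟨chebProj2_zero', chebProj2_pos', fun n hn => ?_⟩
  rw [tsum_eq_single 0 (fun m hm =>
    by rw [chebProj2_pos' m (Nat.one_le_iff_ne_zero.mpr hm), mul_zero])]
  rw [Nat.cast_zero, zero_div, chebProj2_zero']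
  ring

end
end
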